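/- Let K be a field, V a K-vector space, and φ : V → V a K-linear endomorphism. Suppose the inclusion of the fixed subspace ker(φ − id) ⊆ V admits a φ-equivariant K-linear splitting, i.e., there is a K-linear projection p : V → ker(φ − id) restricting to the identity on ker(φ − id) and satisfying p ∘ φ = φ ∘ p. Then the generalized eigenspace of φ for eigenvalue 1, namely ⋃_{n ≥ 1} ker((φ − id)^n), equals ker(φ − id). -/
import Mathlib


/-- **Linear-algebra content of Section 2.3.4.** Let `K` be a field, `V` a `K`-vector space
and `φ : V → V` a `K`-linear endomorphism. Suppose the inclusion of the fixed subspace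
`ker(φ − id) ⊆ V` admits a `φ`-equivariant `K`-linear splitting, i.e. there is a `K`-linear
projection `p : V → V` with values in `ker(φ − id)`, restricting to the identity on
`ker(φ − id)` and commuting with `φ`. Then the generalized eigenspace of `φ` for the
eigenvalue `1`, namely `⋃_{n ≥ 1} ker((φ − id)^n)`, equals `ker(φ − id)`. -/
theorem genEigenspace_one_eq_fixed_of_equivariant_splitting
    {K V : Type*} [Field K] [AddCommGroup V] [Module K V]
    (φ : V →ₗ[K] V) (p : V →ₗ[K] V)
    (hrange : ∀ v : V, p v ∈ LinearMap.ker (φ - LinearMap.id))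
    (hproj : ∀ v ∈ LinearMap.ker (φ - LinearMap.id), p v = v)
    (hequiv : p ∘ₗ φ = φ ∘ₗ p) :
    (⋃ (n : ℕ) (_ : 1 ≤ n),
        (LinearMap.ker ((φ - LinearMap.id) ^ n) : Set V)) =
      (LinearMap.ker (φ - LinearMap.id) : Set V) := by
  set ψ := φ - LinearMap.id with hψ
  have hcomm : ∀ v, p (ψ v) = ψ (p v) := by
    intro v
    have h := congrFun (congrArg DFunLike.coe hequiv) v
    simp only [LinearMap.comp_apply] at h
    simp [hψ, LinearMap.sub_apply, h]
  have key : ∀ v, ψ (ψ v) = 0 → ψ v = 0 := by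
    intro v h
    have h2 : p (ψ v) = ψ v := hproj _ h
    have h3 : ψ (p v) = 0 := LinearMap.mem_ker.mp (hrange v)
    rw [← h2, hcomm, h3]
  have hker : ∀ n, 1 ≤ n → ∀ v, (ψ ^ n) v = 0 → ψ v = 0 := by
    intro n
    induction n with
    | zero => omega
    | succ n ih =>
      intro _ v hv
      rcases Nat.eq_zero_or_pos n with hn | hn
      · subst hn; simpa using hv
      · have hv' : (ψ ^ n) (ψ v) = 0 := by
          rw [← Module.End.mul_apply, ← pow_succ]; exact hv
        exact key v (ih hn (ψ v) hv')
  ext v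
  simp only [Set.mem_iUnion, SetLike.mem_coe, LinearMap.mem_ker]
  constructor
  · rintro ⟨n, hn, hv⟩
    exact hker n hn v hv
  · intro hv
    exact ⟨1, le_refl 1, by simpa using hv⟩
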